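/- arXiv:1312.0034 — 5 statements merged into one kernel-verified Lean document; each statement's English description precedes it below -/
import Mathlib

section
/- The period map Φ is injective on the open disk {u ∈ ℂ_p : |u| < |π|^{1/(q+1)}}: if u, u' ∈ ℂ_p satisfy |u| < |π|^{1/(q+1)}, |u'| < |π|^{1/(q+1)} and φ_0(u)·φ_1(u') = φ_1(u)·φ_0(u'), then u = u'. -/
open Filter


/-- The coefficients `m_k(u)` of the quasi-logarithm of the Gross-Hopkins
universal deformation: `m_0 = 1`, `m_1(u) = u/π`, and
`m_k(u) = (u/π)·m_{k-1}(u^q) + (1/π)·m_{k-2}(u^{q²})`. -/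
noncomputable def ghm {C : Type*} [Field C] (π : C) (q : ℕ) : ℕ → C → C
  | 0, _ => 1
  | 1, u => u / π
  | (k+2), u => (u / π) * ghm π q (k+1) (u ^ q) + (1 / π) * ghm π q k (u ^ (q^2))

/-- First coordinate of the Gross-Hopkins period map:
`φ₀(u) = lim_k π^k · m_{2k}(u)`. -/
noncomputable def ghphi0 {C : Type*} [NormedField C] (π : C) (q : ℕ) (u : C) : C :=
  limUnder atTop (fun k => π ^ k * ghm π q (2*k) u)

/-- Second coordinate of the Gross-Hopkins period map:
`φ₁(u) = lim_{k≥1} π^k · m_{2k-1}(u)`. -/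
noncomputable def ghphi1 {C : Type*} [NormedField C] (π : C) (q : ℕ) (u : C) : C :=
  limUnder atTop (fun k => π ^ (k+1) * ghm π q (2*k+1) u)

/-!
Write `A_k(u) = π^k m_{2k}(u)` and `B_k(u) = π^{k+1} m_{2k+1}(u)`, so that
`A_{k+1}(u) = A_k(u^{q²}) + (u/π) B_k(u^q)` and `B_{k+1}(u) = B_k(u^{q²}) + u A_{k+1}(u^q)`.
On a disk `‖u‖ ≤ r` with `ρ = r^{q+1}/‖π‖ < 1`, the ultrametric inequality and induction on `k`
show that every `A_k` is `r^q/‖π‖`-Lipschitz, every `B_k` is `1`-Lipschitz, and consecutive terms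
differ by `O(ρ^k)`. Hence `φ₀ = lim A_k` and `φ₁ = lim B_k` exist and keep these Lipschitz bounds;
as `A_k(0) = 1`, also `‖φ₀‖ = 1`. In the limit `φ₁(u) = φ₁(u^{q²}) + u φ₀(u^q)`, so
`c(u) = φ₁(u) - u φ₀(u) = φ₁(u^{q²}) + u (φ₀(u^q) - φ₀(u))` is `ρ`-Lipschitz: the leading term `u`
of `φ₁` cancels. Finally `φ₀(u) φ₁(u') = φ₁(u) φ₀(u')` rearranges to
`(u - u') φ₀(u) φ₀(u') = φ₀(u) (c(u') - c(u)) + c(u) (φ₀(u) - φ₀(u'))`,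
whence `‖u - u'‖ ≤ ρ ‖u - u'‖` and `u = u'`.
-/

open Topology IsUltrametricDist

noncomputable def ghphi0Seq {C : Type*} [Field C] (π : C) (q k : ℕ) (u : C) : C :=
  π ^ k * ghm π q (2 * k) u

noncomputable def ghphi1Seq {C : Type*} [Field C] (π : C) (q k : ℕ) (u : C) : C :=
  π ^ (k + 1) * ghm π q (2 * k + 1) u

section Field

variable {C : Type*} [Field C] {π : C} {q : ℕ}

theorem ghphi0Seq_zero (u : C) : ghphi0Seq π q 0 u = 1 := by
  simp [ghphi0Seq, ghm]

theorem ghphi1Seq_zero (hπ : π ≠ 0) (u : C) : ghphi1Seq π q 0 u = u := by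
  simp [ghphi1Seq, ghm, mul_div_cancel₀ u hπ]

theorem ghphi0Seq_succ (hπ : π ≠ 0) (k : ℕ) (u : C) :
    ghphi0Seq π q (k + 1) u =
      ghphi0Seq π q k (u ^ q ^ 2) + u / π * ghphi1Seq π q k (u ^ q) := by
  rw [ghphi0Seq, show 2 * (k + 1) = 2 * k + 2 by ring, ghm, ghphi0Seq, ghphi1Seq]
  field_simp
  ring

theorem ghphi1Seq_succ (hπ : π ≠ 0) (k : ℕ) (u : C) :
    ghphi1Seq π q (k + 1) u =
      ghphi1Seq π q k (u ^ q ^ 2) + u * ghphi0Seq π q (k + 1) (u ^ q) := by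
  rw [ghphi1Seq, show 2 * (k + 1) + 1 = 2 * k + 1 + 2 by ring, ghm, ghphi1Seq, ghphi0Seq,
    show 2 * k + 1 + 1 = 2 * (k + 1) by ring]
  field_simp
  ring

theorem ghphi0Seq_apply_zero (hπ : π ≠ 0) (hq : q ≠ 0) (k : ℕ) : ghphi0Seq π q k 0 = 1 := by
  induction k with
  | zero => exact ghphi0Seq_zero 0
  | succ k ih => simp [ghphi0Seq_succ hπ, hq, ih]

theorem ghphi1Seq_apply_zero (hπ : π ≠ 0) (hq : q ≠ 0) (k : ℕ) : ghphi1Seq π q k 0 = 0 := by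
  induction k with
  | zero => exact ghphi1Seq_zero hπ 0
  | succ k ih => simp [ghphi1Seq_succ hπ, hq, ih]

end Field

theorem le_one_of_pow_succ_le {s P : ℝ} {q : ℕ} (hs : 0 ≤ s) (hP1 : P ≤ 1) (h : s ^ (q + 1) ≤ P) :
    s ≤ 1 :=
  (pow_le_one_iff_of_nonneg hs q.succ_ne_zero).1 (h.trans hP1)

section Ultrametric

variable {C : Type*} [NormedField C]

theorem norm_pow_le_of_norm_le_of_le_one {r : ℝ} {v : C} (hv : ‖v‖ ≤ r) (hr1 : r ≤ 1) {n : ℕ}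
    (hn : n ≠ 0) : ‖v ^ n‖ ≤ r := by
  rw [norm_pow]
  exact (pow_le_pow_left₀ (norm_nonneg v) hv n).trans
    (pow_le_of_le_one ((norm_nonneg v).trans hv) hr1 hn)

variable [IsUltrametricDist C]

theorem norm_sub_le_max_norm (x y : C) : ‖x - y‖ ≤ max ‖x‖ ‖y‖ := by
  simpa [dist_eq_norm] using IsUltrametricDist.dist_triangle_max x 0 y

theorem norm_mul_sub_mul_le_max (x x' y y' : C) :
    ‖x * y - x' * y'‖ ≤ max (‖x - x'‖ * ‖y‖) (‖x'‖ * ‖y - y'‖) := by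
  rw [show x * y - x' * y' = (x - x') * y + x' * (y - y') by ring, ← norm_mul, ← norm_mul]
  exact norm_add_le_max _ _

theorem norm_pow_sub_pow_le {r : ℝ} {u u' : C} (hu : ‖u‖ ≤ r) (hu' : ‖u'‖ ≤ r) (n : ℕ) :
    ‖u ^ n - u' ^ n‖ ≤ r ^ (n - 1) * ‖u - u'‖ := by
  have hr : 0 ≤ r := (norm_nonneg u).trans hu
  induction n with
  | zero => simp
  | succ n ih =>
    rcases Nat.eq_zero_or_pos n with rfl | hn
    · simp
    rw [pow_succ, pow_succ]
    refine (norm_mul_sub_mul_le_max _ _ _ _).trans (max_le ?_ ?_)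
    · calc ‖u ^ n - u' ^ n‖ * ‖u‖ ≤ r ^ (n - 1) * ‖u - u'‖ * r := by gcongr
        _ = r ^ (n + 1 - 1) * ‖u - u'‖ := by
          rw [Nat.add_sub_cancel, ← pow_sub_one_mul hn.ne' r]; ring
    · rw [norm_pow, Nat.add_sub_cancel]
      gcongr

theorem norm_pow_sub_pow_le_norm_sub {u u' : C} (hu : ‖u‖ ≤ 1) (hu' : ‖u'‖ ≤ 1) (n : ℕ) :
    ‖u ^ n - u' ^ n‖ ≤ ‖u - u'‖ := by
  simpa using norm_pow_sub_pow_le hu hu' n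

theorem norm_eq_one_of_norm_sub_one_lt_one {x : C} (h : ‖x - 1‖ < 1) : ‖x‖ = 1 := by
  rw [← sub_add_cancel x 1, norm_add_eq_max_of_norm_ne_norm (by simpa using h.ne), norm_one,
    max_eq_right (by simpa using h.le)]

theorem norm_sub_le_of_mul_eq_mul {a a' b b' u u' : C} (h : a * b' = b * a') (ha : ‖a‖ = 1)
    (ha' : ‖a'‖ = 1) :
    ‖u - u'‖ ≤ max ‖(b - u * a) - (b' - u' * a')‖ (‖b - u * a‖ * ‖a - a'‖) := by
  have key : (u - u') * (a * a') = a * ((b' - u' * a') - (b - u * a)) + (b - u * a) * (a - a') := by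
    linear_combination -h
  calc ‖u - u'‖ = ‖(u - u') * (a * a')‖ := by simp [ha, ha']
    _ ≤ max ‖a * ((b' - u' * a') - (b - u * a))‖ ‖(b - u * a) * (a - a')‖ := by
      rw [key]; exact norm_add_le_max _ _
    _ = _ := by rw [norm_mul, norm_mul, ha, one_mul, norm_sub_rev]

end Ultrametric

section Lipschitz

variable {C : Type*} [NormedField C] [IsUltrametricDist C] {π : C} {q : ℕ} {r : ℝ}

theorem norm_ghphi0Seq_sub_le_succ (hπ : π ≠ 0) (hq : q ≠ 0) (hr1 : r ≤ 1) {k : ℕ}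
    (hA : ∀ v v' : C, ‖v‖ ≤ r → ‖v'‖ ≤ r →
      ‖ghphi0Seq π q k v - ghphi0Seq π q k v'‖ ≤ r ^ q / ‖π‖ * ‖v - v'‖)
    (hB : ∀ v v' : C, ‖v‖ ≤ r → ‖v'‖ ≤ r →
      ‖ghphi1Seq π q k v - ghphi1Seq π q k v'‖ ≤ ‖v - v'‖)
    {u u' : C} (hu : ‖u‖ ≤ r) (hu' : ‖u'‖ ≤ r) :
    ‖ghphi0Seq π q (k + 1) u - ghphi0Seq π q (k + 1) u'‖ ≤ r ^ q / ‖π‖ * ‖u - u'‖ := by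
  have hr0 : 0 ≤ r := (norm_nonneg u).trans hu
  have hq2 : q ^ 2 ≠ 0 := pow_ne_zero 2 hq
  have huq := norm_pow_le_of_norm_le_of_le_one hu hr1 hq
  have huq' := norm_pow_le_of_norm_le_of_le_one hu' hr1 hq
  have hfirst : ‖ghphi0Seq π q k (u ^ q ^ 2) - ghphi0Seq π q k (u' ^ q ^ 2)‖ ≤
      r ^ q / ‖π‖ * ‖u - u'‖ := by
    refine (hA _ _ (norm_pow_le_of_norm_le_of_le_one hu hr1 hq2)
      (norm_pow_le_of_norm_le_of_le_one hu' hr1 hq2)).trans ?_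
    gcongr
    exact norm_pow_sub_pow_le_norm_sub (hu.trans hr1) (hu'.trans hr1) _
  have hB0 : ‖ghphi1Seq π q k (u ^ q)‖ ≤ r ^ q := by
    have h := hB (u ^ q) 0 huq (by simpa using hr0)
    rw [ghphi1Seq_apply_zero hπ hq, sub_zero, sub_zero, norm_pow] at h
    exact h.trans (pow_le_pow_left₀ (norm_nonneg u) hu q)
  rw [ghphi0Seq_succ hπ, ghphi0Seq_succ hπ, add_sub_add_comm]
  refine (norm_add_le_max _ _).trans (max_le hfirst
    ((norm_mul_sub_mul_le_max _ _ _ _).trans (max_le ?_ ?_)))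
  · rw [← sub_div, norm_div]
    calc ‖u - u'‖ / ‖π‖ * ‖ghphi1Seq π q k (u ^ q)‖ ≤ ‖u - u'‖ / ‖π‖ * r ^ q := by gcongr
      _ = r ^ q / ‖π‖ * ‖u - u'‖ := by ring
  · rw [norm_div]
    calc ‖u'‖ / ‖π‖ * ‖ghphi1Seq π q k (u ^ q) - ghphi1Seq π q k (u' ^ q)‖
        ≤ r / ‖π‖ * (r ^ (q - 1) * ‖u - u'‖) := by
          gcongr
          exact (hB _ _ huq huq').trans (norm_pow_sub_pow_le hu hu' q)
      _ = r ^ q / ‖π‖ * ‖u - u'‖ := by rw [← pow_sub_one_mul hq r]; ring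

theorem norm_ghphi1Seq_sub_le_succ (hπ : π ≠ 0) (hq : q ≠ 0) (hr1 : r ≤ 1)
    (hrπ : r ^ (q + 1) ≤ ‖π‖) {k : ℕ}
    (hA : ∀ v v' : C, ‖v‖ ≤ r → ‖v'‖ ≤ r →
      ‖ghphi0Seq π q (k + 1) v - ghphi0Seq π q (k + 1) v'‖ ≤ r ^ q / ‖π‖ * ‖v - v'‖)
    (hB : ∀ v v' : C, ‖v‖ ≤ r → ‖v'‖ ≤ r →
      ‖ghphi1Seq π q k v - ghphi1Seq π q k v'‖ ≤ ‖v - v'‖)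
    {u u' : C} (hu : ‖u‖ ≤ r) (hu' : ‖u'‖ ≤ r) :
    ‖ghphi1Seq π q (k + 1) u - ghphi1Seq π q (k + 1) u'‖ ≤ ‖u - u'‖ := by
  have hr0 : 0 ≤ r := (norm_nonneg u).trans hu
  have hπ0 : 0 < ‖π‖ := norm_pos_iff.mpr hπ
  have hρ : r ^ q / ‖π‖ * r ≤ 1 := by rwa [div_mul_eq_mul_div, ← pow_succ, div_le_one hπ0]
  have hq2 : q ^ 2 ≠ 0 := pow_ne_zero 2 hq
  have huq := norm_pow_le_of_norm_le_of_le_one hu hr1 hq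
  have huq' := norm_pow_le_of_norm_le_of_le_one hu' hr1 hq
  have hA1 : ‖ghphi0Seq π q (k + 1) (u ^ q)‖ ≤ 1 := by
    have h := hA (u ^ q) 0 huq (by simpa using hr0)
    rw [ghphi0Seq_apply_zero hπ hq, sub_zero] at h
    have h1 := h.trans ((mul_le_mul_of_nonneg_left huq (by positivity)).trans hρ)
    simpa using (norm_add_le_max (ghphi0Seq π q (k + 1) (u ^ q) - 1) 1).trans
      (max_le h1 norm_one.le)
  rw [ghphi1Seq_succ hπ, ghphi1Seq_succ hπ, add_sub_add_comm]
  refine (norm_add_le_max _ _).trans (max_le ?_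
    ((norm_mul_sub_mul_le_max _ _ _ _).trans (max_le ?_ ?_)))
  · exact (hB _ _ (norm_pow_le_of_norm_le_of_le_one hu hr1 hq2)
      (norm_pow_le_of_norm_le_of_le_one hu' hr1 hq2)).trans
      (norm_pow_sub_pow_le_norm_sub (hu.trans hr1) (hu'.trans hr1) _)
  · exact mul_le_of_le_one_right (norm_nonneg _) hA1
  · calc ‖u'‖ * ‖ghphi0Seq π q (k + 1) (u ^ q) - ghphi0Seq π q (k + 1) (u' ^ q)‖
        ≤ r * (r ^ q / ‖π‖ * ‖u - u'‖) := by
          gcongr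
          exact (hA _ _ huq huq').trans (by
            gcongr
            exact norm_pow_sub_pow_le_norm_sub (hu.trans hr1) (hu'.trans hr1) q)
      _ ≤ ‖u - u'‖ := by
        rw [← mul_assoc, mul_comm r]
        exact mul_le_of_le_one_left (norm_nonneg _) hρ

theorem norm_ghphiSeq_sub_le (hπ : π ≠ 0) (hq : q ≠ 0) (hr1 : r ≤ 1)
    (hrπ : r ^ (q + 1) ≤ ‖π‖) (k : ℕ) :
    (∀ v v' : C, ‖v‖ ≤ r → ‖v'‖ ≤ r →
      ‖ghphi0Seq π q k v - ghphi0Seq π q k v'‖ ≤ r ^ q / ‖π‖ * ‖v - v'‖) ∧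
    (∀ v v' : C, ‖v‖ ≤ r → ‖v'‖ ≤ r →
      ‖ghphi1Seq π q k v - ghphi1Seq π q k v'‖ ≤ ‖v - v'‖) := by
  induction k with
  | zero =>
    refine ⟨fun v v' hv _ => ?_, fun v v' _ _ => ?_⟩
    · have hr0 : 0 ≤ r := (norm_nonneg v).trans hv
      simp only [ghphi0Seq_zero, sub_self, norm_zero]
      positivity
    · simp [ghphi1Seq_zero hπ]
  | succ k ih =>
    have hA : ∀ v v' : C, ‖v‖ ≤ r → ‖v'‖ ≤ r → _ := fun v v' hv hv' =>
      norm_ghphi0Seq_sub_le_succ hπ hq hr1 ih.1 ih.2 hv hv'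
    exact ⟨hA, fun v v' hv hv' => norm_ghphi1Seq_sub_le_succ hπ hq hr1 hrπ hA ih.2 hv hv'⟩

end Lipschitz

theorem pow_sq_pow_div_pow_le {s P : ℝ} {q : ℕ} (hs0 : 0 ≤ s) (hP0 : 0 < P) (hP1 : P ≤ 1)
    (hsP : s ^ (q + 1) ≤ P) (hq : 2 ≤ q) (k : ℕ) :
    ((s ^ q ^ 2) ^ (q + 1) / P) ^ (k + 1) ≤ (s ^ (q + 1) / P) ^ (k + 2) := by
  have hs1 : s ≤ 1 := le_one_of_pow_succ_le hs0 hP1 hsP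
  calc ((s ^ q ^ 2) ^ (q + 1) / P) ^ (k + 1) ≤ ((s ^ (q + 1)) ^ 2 / P ^ 2) ^ (k + 1) := by
        gcongr ?_ ^ _
        calc (s ^ q ^ 2) ^ (q + 1) / P ≤ (s ^ (q + 1)) ^ 2 / P := by
              gcongr
              rw [← pow_mul, ← pow_mul]
              exact pow_le_pow_of_le_one hs0 hs1 (by nlinarith)
          _ ≤ (s ^ (q + 1)) ^ 2 / P ^ 2 := by
              gcongr
              nlinarith
    _ = (s ^ (q + 1) / P) ^ (2 * (k + 1)) := by ring
    _ ≤ (s ^ (q + 1) / P) ^ (k + 2) :=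
        pow_le_pow_of_le_one (by positivity) ((div_le_one hP0).2 hsP) (by omega)

section Decay

variable {C : Type*} [NormedField C] [IsUltrametricDist C] {π : C} {q : ℕ}

theorem norm_ghphiSeq_one_sub_zero_le (hπ0 : 0 < ‖π‖) (hπ1 : ‖π‖ ≤ 1) (hq : 2 ≤ q) {u : C}
    (hu : ‖u‖ ^ (q + 1) ≤ ‖π‖) :
    ‖ghphi0Seq π q 1 u - ghphi0Seq π q 0 u‖ ≤ ‖u‖ ^ (q + 1) / ‖π‖ ∧
    ‖ghphi1Seq π q 1 u - ghphi1Seq π q 0 u‖ ≤ ‖u‖ * (‖u‖ ^ (q + 1) / ‖π‖) := by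
  have hπ : π ≠ 0 := norm_pos_iff.mp hπ0
  have hu1 := le_one_of_pow_succ_le (norm_nonneg u) hπ1 hu
  have hA : ∀ v : C, ‖ghphi0Seq π q 1 v - ghphi0Seq π q 0 v‖ = ‖v‖ ^ (q + 1) / ‖π‖ := fun v => by
    rw [ghphi0Seq_succ hπ, ghphi0Seq_zero, ghphi0Seq_zero, ghphi1Seq_zero hπ, add_sub_cancel_left,
      norm_mul, norm_div, norm_pow]
    ring
  have hB : ghphi1Seq π q 1 u - ghphi1Seq π q 0 u =
      u ^ q ^ 2 + u * (ghphi0Seq π q 1 (u ^ q) - ghphi0Seq π q 0 (u ^ q)) := by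
    rw [ghphi1Seq_succ hπ, ghphi1Seq_zero hπ, ghphi1Seq_zero hπ, ghphi0Seq_zero]
    ring
  refine ⟨(hA u).le, ?_⟩
  rw [hB]
  refine (norm_add_le_max _ _).trans (max_le ?_ ?_)
  · calc ‖u ^ q ^ 2‖ ≤ ‖u‖ ^ (q + 2) := by
          rw [norm_pow]
          exact pow_le_pow_of_le_one (norm_nonneg u) hu1 (by nlinarith)
      _ = ‖u‖ * ‖u‖ ^ (q + 1) := by ring
      _ ≤ ‖u‖ * (‖u‖ ^ (q + 1) / ‖π‖) := by
          gcongr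
          exact le_div_self (by positivity) hπ0 hπ1
  · rw [norm_mul, hA, norm_pow]
    gcongr
    exact pow_le_of_le_one (norm_nonneg u) hu1 (by omega)

theorem norm_ghphi0Seq_add_two_sub_le (hπ0 : 0 < ‖π‖) (hπ1 : ‖π‖ ≤ 1) (hq : 2 ≤ q) {k : ℕ}
    (hA : ∀ v : C, ‖v‖ ^ (q + 1) ≤ ‖π‖ →
      ‖ghphi0Seq π q (k + 1) v - ghphi0Seq π q k v‖ ≤ (‖v‖ ^ (q + 1) / ‖π‖) ^ (k + 1))
    (hB : ∀ v : C, ‖v‖ ^ (q + 1) ≤ ‖π‖ →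
      ‖ghphi1Seq π q (k + 1) v - ghphi1Seq π q k v‖ ≤ ‖v‖ * (‖v‖ ^ (q + 1) / ‖π‖) ^ (k + 1))
    {u : C} (hu : ‖u‖ ^ (q + 1) ≤ ‖π‖) :
    ‖ghphi0Seq π q (k + 2) u - ghphi0Seq π q (k + 1) u‖ ≤ (‖u‖ ^ (q + 1) / ‖π‖) ^ (k + 2) := by
  have hπ : π ≠ 0 := norm_pos_iff.mp hπ0
  have hu1 := le_one_of_pow_succ_le (norm_nonneg u) hπ1 hu
  have huq : ‖u ^ q‖ ≤ ‖u‖ := norm_pow_le_of_norm_le_of_le_one le_rfl hu1 (by omega)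
  have huq2 : ‖u ^ q ^ 2‖ ≤ ‖u‖ := norm_pow_le_of_norm_le_of_le_one le_rfl hu1 (by positivity)
  rw [ghphi0Seq_succ hπ (k + 1) u, ghphi0Seq_succ hπ k u, add_sub_add_comm, ← mul_sub]
  refine (norm_add_le_max _ _).trans (max_le ?_ ?_)
  · refine (hA _ ((pow_le_pow_left₀ (norm_nonneg _) huq2 _).trans hu)).trans ?_
    rw [norm_pow]
    exact pow_sq_pow_div_pow_le (norm_nonneg u) hπ0 hπ1 hu hq k
  · rw [norm_mul, norm_div]
    calc ‖u‖ / ‖π‖ * ‖ghphi1Seq π q (k + 1) (u ^ q) - ghphi1Seq π q k (u ^ q)‖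
        ≤ ‖u‖ / ‖π‖ * (‖u‖ ^ q * (‖u‖ ^ (q + 1) / ‖π‖) ^ (k + 1)) := by
          gcongr
          refine (hB _ ((pow_le_pow_left₀ (norm_nonneg _) huq _).trans hu)).trans ?_
          rw [norm_pow]
          gcongr
          exact pow_le_of_le_one (norm_nonneg u) hu1 (by omega)
      _ = (‖u‖ ^ (q + 1) / ‖π‖) ^ (k + 2) := by ring

theorem norm_ghphi1Seq_add_two_sub_le (hπ0 : 0 < ‖π‖) (hπ1 : ‖π‖ ≤ 1) (hq : 2 ≤ q) {k : ℕ}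
    (hA : ∀ v : C, ‖v‖ ^ (q + 1) ≤ ‖π‖ →
      ‖ghphi0Seq π q (k + 2) v - ghphi0Seq π q (k + 1) v‖ ≤ (‖v‖ ^ (q + 1) / ‖π‖) ^ (k + 2))
    (hB : ∀ v : C, ‖v‖ ^ (q + 1) ≤ ‖π‖ →
      ‖ghphi1Seq π q (k + 1) v - ghphi1Seq π q k v‖ ≤ ‖v‖ * (‖v‖ ^ (q + 1) / ‖π‖) ^ (k + 1))
    {u : C} (hu : ‖u‖ ^ (q + 1) ≤ ‖π‖) :
    ‖ghphi1Seq π q (k + 2) u - ghphi1Seq π q (k + 1) u‖ ≤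
      ‖u‖ * (‖u‖ ^ (q + 1) / ‖π‖) ^ (k + 2) := by
  have hπ : π ≠ 0 := norm_pos_iff.mp hπ0
  have hu1 := le_one_of_pow_succ_le (norm_nonneg u) hπ1 hu
  have huq : ‖u ^ q‖ ≤ ‖u‖ := norm_pow_le_of_norm_le_of_le_one le_rfl hu1 (by omega)
  have huq2 : ‖u ^ q ^ 2‖ ≤ ‖u‖ := norm_pow_le_of_norm_le_of_le_one le_rfl hu1 (by positivity)
  rw [ghphi1Seq_succ hπ (k + 1) u, ghphi1Seq_succ hπ k u, add_sub_add_comm, ← mul_sub]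
  refine (norm_add_le_max _ _).trans (max_le ?_ ?_)
  · refine (hB _ ((pow_le_pow_left₀ (norm_nonneg _) huq2 _).trans hu)).trans ?_
    gcongr
    rw [norm_pow]
    exact pow_sq_pow_div_pow_le (norm_nonneg u) hπ0 hπ1 hu hq k
  · rw [norm_mul]
    gcongr
    refine (hA _ ((pow_le_pow_left₀ (norm_nonneg _) huq _).trans hu)).trans ?_
    gcongr

theorem norm_ghphiSeq_succ_sub_le (hπ0 : 0 < ‖π‖) (hπ1 : ‖π‖ ≤ 1) (hq : 2 ≤ q) (k : ℕ) :
    (∀ u : C, ‖u‖ ^ (q + 1) ≤ ‖π‖ →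
      ‖ghphi0Seq π q (k + 1) u - ghphi0Seq π q k u‖ ≤ (‖u‖ ^ (q + 1) / ‖π‖) ^ (k + 1)) ∧
    (∀ u : C, ‖u‖ ^ (q + 1) ≤ ‖π‖ →
      ‖ghphi1Seq π q (k + 1) u - ghphi1Seq π q k u‖ ≤ ‖u‖ * (‖u‖ ^ (q + 1) / ‖π‖) ^ (k + 1)) := by
  induction k with
  | zero =>
    exact ⟨fun u hu => by simpa using (norm_ghphiSeq_one_sub_zero_le hπ0 hπ1 hq hu).1,
      fun u hu => by simpa using (norm_ghphiSeq_one_sub_zero_le hπ0 hπ1 hq hu).2⟩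
  | succ k ih =>
    have hA : ∀ u : C, ‖u‖ ^ (q + 1) ≤ ‖π‖ → _ := fun u hu =>
      norm_ghphi0Seq_add_two_sub_le hπ0 hπ1 hq ih.1 ih.2 hu
    exact ⟨hA, fun u hu => norm_ghphi1Seq_add_two_sub_le hπ0 hπ1 hq hA ih.2 hu⟩

end Decay

section Limits

variable {C : Type*} [NormedField C] {π : C} {q : ℕ}

theorem ghphi0_zero (hπ : π ≠ 0) (hq : q ≠ 0) : ghphi0 π q (0 : C) = 1 := by
  change limUnder atTop (ghphi0Seq π q · 0) = 1
  simp only [ghphi0Seq_apply_zero hπ hq]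
  exact tendsto_const_nhds.limUnder_eq

theorem ghphi1_zero (hπ : π ≠ 0) (hq : q ≠ 0) : ghphi1 π q (0 : C) = 0 := by
  change limUnder atTop (ghphi1Seq π q · 0) = 0
  simp only [ghphi1Seq_apply_zero hπ hq]
  exact tendsto_const_nhds.limUnder_eq

variable [IsUltrametricDist C] [CompleteSpace C]

theorem tendsto_ghphi0Seq (hπ0 : 0 < ‖π‖) (hπ1 : ‖π‖ ≤ 1) (hq : 2 ≤ q) {u : C}
    (hu : ‖u‖ ^ (q + 1) < ‖π‖) : Tendsto (ghphi0Seq π q · u) atTop (𝓝 (ghphi0 π q u)) := by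
  refine (cauchySeq_of_le_geometric _ (‖u‖ ^ (q + 1) / ‖π‖) ((div_lt_one hπ0).2 hu)
    fun k => ?_).tendsto_limUnder
  rw [dist_comm, dist_eq_norm, ← pow_succ']
  exact (norm_ghphiSeq_succ_sub_le hπ0 hπ1 hq k).1 u hu.le

theorem tendsto_ghphi1Seq (hπ0 : 0 < ‖π‖) (hπ1 : ‖π‖ ≤ 1) (hq : 2 ≤ q) {u : C}
    (hu : ‖u‖ ^ (q + 1) < ‖π‖) : Tendsto (ghphi1Seq π q · u) atTop (𝓝 (ghphi1 π q u)) := by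
  refine (cauchySeq_of_le_geometric _ (‖u‖ * (‖u‖ ^ (q + 1) / ‖π‖)) ((div_lt_one hπ0).2 hu)
    fun k => ?_).tendsto_limUnder
  rw [dist_comm, dist_eq_norm, mul_assoc, ← pow_succ']
  exact (norm_ghphiSeq_succ_sub_le hπ0 hπ1 hq k).2 u hu.le

theorem norm_ghphi_sub_le (hπ0 : 0 < ‖π‖) (hπ1 : ‖π‖ ≤ 1) (hq : 2 ≤ q) {r : ℝ}
    (hr : r ^ (q + 1) < ‖π‖) {u u' : C} (hu : ‖u‖ ≤ r) (hu' : ‖u'‖ ≤ r) :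
    ‖ghphi0 π q u - ghphi0 π q u'‖ ≤ r ^ q / ‖π‖ * ‖u - u'‖ ∧
    ‖ghphi1 π q u - ghphi1 π q u'‖ ≤ ‖u - u'‖ := by
  have hr1 : r ≤ 1 := le_one_of_pow_succ_le ((norm_nonneg u).trans hu) hπ1 hr.le
  have hdom : ∀ {v : C}, ‖v‖ ≤ r → ‖v‖ ^ (q + 1) < ‖π‖ := fun hv =>
    (pow_le_pow_left₀ (norm_nonneg _) hv _).trans_lt hr
  have hlip := norm_ghphiSeq_sub_le (norm_pos_iff.mp hπ0) (by omega) hr1 hr.le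
  exact ⟨le_of_tendsto'
      ((tendsto_ghphi0Seq hπ0 hπ1 hq (hdom hu)).sub (tendsto_ghphi0Seq hπ0 hπ1 hq (hdom hu'))).norm
      fun k => (hlip k).1 u u' hu hu',
    le_of_tendsto'
      ((tendsto_ghphi1Seq hπ0 hπ1 hq (hdom hu)).sub (tendsto_ghphi1Seq hπ0 hπ1 hq (hdom hu'))).norm
      fun k => (hlip k).2 u u' hu hu'⟩

theorem ghphi1_eq_add (hπ0 : 0 < ‖π‖) (hπ1 : ‖π‖ ≤ 1) (hq : 2 ≤ q) {u : C}
    (hu : ‖u‖ ^ (q + 1) < ‖π‖) :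
    ghphi1 π q u = ghphi1 π q (u ^ q ^ 2) + u * ghphi0 π q (u ^ q) := by
  have hu1 := le_one_of_pow_succ_le (norm_nonneg u) hπ1 hu.le
  have hdom : ∀ {n : ℕ}, n ≠ 0 → ‖u ^ n‖ ^ (q + 1) < ‖π‖ := fun hn =>
    (pow_le_pow_left₀ (norm_nonneg _) (norm_pow_le_of_norm_le_of_le_one le_rfl hu1 hn) _).trans_lt
      hu
  refine tendsto_nhds_unique ((tendsto_ghphi1Seq hπ0 hπ1 hq hu).comp (tendsto_add_atTop_nat 1)) ?_
  simp only [Function.comp_def, ghphi1Seq_succ (norm_pos_iff.mp hπ0)]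
  exact (tendsto_ghphi1Seq hπ0 hπ1 hq (hdom (by positivity))).add
    (((tendsto_ghphi0Seq hπ0 hπ1 hq (hdom (by omega))).comp (tendsto_add_atTop_nat 1)).const_mul u)

theorem norm_ghphi0_eq_one (hπ0 : 0 < ‖π‖) (hπ1 : ‖π‖ ≤ 1) (hq : 2 ≤ q) {u : C}
    (hu : ‖u‖ ^ (q + 1) < ‖π‖) : ‖ghphi0 π q u‖ = 1 := by
  have h := (norm_ghphi_sub_le hπ0 hπ1 hq hu le_rfl (show ‖(0 : C)‖ ≤ ‖u‖ by simp)).1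
  rw [ghphi0_zero (norm_pos_iff.mp hπ0) (by omega), sub_zero] at h
  refine norm_eq_one_of_norm_sub_one_lt_one (h.trans_lt ?_)
  rwa [div_mul_eq_mul_div, ← pow_succ, div_lt_one hπ0]

theorem norm_ghphi1_sub_mul_ghphi0_le (hπ0 : 0 < ‖π‖) (hπ1 : ‖π‖ ≤ 1) (hq : 2 ≤ q) {u : C}
    (hu : ‖u‖ ^ (q + 1) < ‖π‖) : ‖ghphi1 π q u - u * ghphi0 π q u‖ ≤ ‖u‖ := by
  have h := (norm_ghphi_sub_le hπ0 hπ1 hq hu le_rfl (show ‖(0 : C)‖ ≤ ‖u‖ by simp)).2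
  rw [ghphi1_zero (norm_pos_iff.mp hπ0) (by omega), sub_zero, sub_zero] at h
  refine (norm_sub_le_max_norm _ _).trans (max_le h ?_)
  rw [norm_mul, norm_ghphi0_eq_one hπ0 hπ1 hq hu, mul_one]

theorem norm_ghphi1_sub_mul_ghphi0_sub_le (hπ0 : 0 < ‖π‖) (hπ1 : ‖π‖ ≤ 1) (hq : 2 ≤ q) {r : ℝ}
    (hr : r ^ (q + 1) < ‖π‖) {u u' : C} (hu : ‖u‖ ≤ r) (hu' : ‖u'‖ ≤ r) :
    ‖(ghphi1 π q u - u * ghphi0 π q u) - (ghphi1 π q u' - u' * ghphi0 π q u')‖ ≤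
      r ^ (q + 1) / ‖π‖ * ‖u - u'‖ := by
  have hr0 : 0 ≤ r := (norm_nonneg u).trans hu
  have hr1 : r ≤ 1 := le_one_of_pow_succ_le hr0 hπ1 hr.le
  have hq0 : q ≠ 0 := by omega
  have hball : ∀ {v : C}, ‖v‖ ≤ r → ∀ {n : ℕ}, n ≠ 0 → ‖v ^ n‖ ≤ r := fun hv _ hn =>
    norm_pow_le_of_norm_le_of_le_one hv hr1 hn
  have hlip : ∀ {v v' : C}, ‖v‖ ≤ r → ‖v'‖ ≤ r →
      ‖ghphi0 π q v - ghphi0 π q v'‖ ≤ r ^ q / ‖π‖ * ‖v - v'‖ := fun hv hv' =>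
    (norm_ghphi_sub_le hπ0 hπ1 hq hr hv hv').1
  have hc : ∀ {v : C}, ‖v‖ ≤ r → ghphi1 π q v - v * ghphi0 π q v =
      ghphi1 π q (v ^ q ^ 2) + v * (ghphi0 π q (v ^ q) - ghphi0 π q v) := fun hv => by
    rw [ghphi1_eq_add hπ0 hπ1 hq ((pow_le_pow_left₀ (norm_nonneg _) hv _).trans_lt hr)]
    ring
  rw [hc hu, hc hu', add_sub_add_comm]
  refine (norm_add_le_max _ _).trans
    (max_le ?_ ((norm_mul_sub_mul_le_max _ _ _ _).trans (max_le ?_ ?_)))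
  · refine ((norm_ghphi_sub_le hπ0 hπ1 hq hr (hball hu (by positivity))
      (hball hu' (by positivity))).2.trans (norm_pow_sub_pow_le hu hu' _)).trans ?_
    gcongr
    calc r ^ (q ^ 2 - 1) ≤ r ^ (q + 1) := pow_le_pow_of_le_one hr0 hr1 (by
          zify [show 1 ≤ q ^ 2 by nlinarith]; nlinarith)
      _ ≤ r ^ (q + 1) / ‖π‖ := le_div_self (by positivity) hπ0 hπ1
  · calc ‖u - u'‖ * ‖ghphi0 π q (u ^ q) - ghphi0 π q u‖ ≤ ‖u - u'‖ * (r ^ q / ‖π‖ * r) := by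
          gcongr
          exact (hlip (hball hu hq0) hu).trans (by
            gcongr
            exact (norm_sub_le_max_norm _ _).trans (max_le (hball hu hq0) hu))
      _ = r ^ (q + 1) / ‖π‖ * ‖u - u'‖ := by ring
  · rw [sub_sub_sub_comm]
    calc ‖u'‖ * ‖ghphi0 π q (u ^ q) - ghphi0 π q (u' ^ q) - (ghphi0 π q u - ghphi0 π q u')‖
        ≤ r * (r ^ q / ‖π‖ * ‖u - u'‖) := by
          gcongr
          refine (norm_sub_le_max_norm _ _).trans (max_le ?_ (hlip hu hu'))
          refine (hlip (hball hu hq0) (hball hu' hq0)).trans ?_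
          gcongr
          exact norm_pow_sub_pow_le_norm_sub (hu.trans hr1) (hu'.trans hr1) q
      _ = r ^ (q + 1) / ‖π‖ * ‖u - u'‖ := by ring

end Limits

theorem pow_succ_lt_of_lt_rpow {x y : ℝ} {n : ℕ} (hx : 0 ≤ x) (hy : 0 ≤ y)
    (h : x < y ^ ((1 : ℝ) / (n + 1))) : x ^ (n + 1) < y := by
  rw [one_div, Real.lt_rpow_inv_iff_of_pos hx hy (by positivity)] at h
  exact_mod_cast h

theorem norm_sub_le_of_ghphi_cross_eq {C : Type*} [NormedField C] [IsUltrametricDist C]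
    [CompleteSpace C] {π : C} {q : ℕ} (hπ0 : 0 < ‖π‖) (hπ1 : ‖π‖ ≤ 1) (hq : 2 ≤ q) {r : ℝ}
    (hr : r ^ (q + 1) < ‖π‖) {u u' : C} (hu : ‖u‖ ≤ r) (hu' : ‖u'‖ ≤ r)
    (h : ghphi0 π q u * ghphi1 π q u' = ghphi1 π q u * ghphi0 π q u') :
    ‖u - u'‖ ≤ r ^ (q + 1) / ‖π‖ * ‖u - u'‖ := by
  have hdom : ∀ {v : C}, ‖v‖ ≤ r → ‖v‖ ^ (q + 1) < ‖π‖ := fun hv =>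
    (pow_le_pow_left₀ (norm_nonneg _) hv _).trans_lt hr
  refine (norm_sub_le_of_mul_eq_mul h (norm_ghphi0_eq_one hπ0 hπ1 hq (hdom hu))
    (norm_ghphi0_eq_one hπ0 hπ1 hq (hdom hu'))).trans
    (max_le (norm_ghphi1_sub_mul_ghphi0_sub_le hπ0 hπ1 hq hr hu hu') ?_)
  calc ‖ghphi1 π q u - u * ghphi0 π q u‖ * ‖ghphi0 π q u - ghphi0 π q u'‖
      ≤ r * (r ^ q / ‖π‖ * ‖u - u'‖) :=
        mul_le_mul ((norm_ghphi1_sub_mul_ghphi0_le hπ0 hπ1 hq (hdom hu)).trans hu)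
          (norm_ghphi_sub_le hπ0 hπ1 hq hr hu hu').1 (norm_nonneg _) ((norm_nonneg u).trans hu)
    _ = r ^ (q + 1) / ‖π‖ * ‖u - u'‖ := by ring

theorem gross_hopkins_injective_small_disk_general {p : ℕ} [Fact p.Prime] {C : Type*} [NormedField C] [IsUltrametricDist C]
    [CompleteSpace C]
    (q : ℕ) (hq : ∃ r : ℕ, 0 < r ∧ q = p ^ r)
    (π : C) (hπ0 : 0 < ‖π‖) (hπ1 : ‖π‖ < 1) :
    ∀ u u' : C, ‖u‖ < ‖π‖ ^ ((1:ℝ)/(q+1)) → ‖u'‖ < ‖π‖ ^ ((1:ℝ)/(q+1)) →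
      ghphi0 π q u * ghphi1 π q u' = ghphi1 π q u * ghphi0 π q u' → u = u' := by
  have hq2 : 2 ≤ q := by
    obtain ⟨n, hn, rfl⟩ := hq
    exact (Fact.out : p.Prime).two_le.trans (Nat.le_self_pow hn.ne' p)
  intro u u' hu hu' heq
  have hr : (max ‖u‖ ‖u'‖) ^ (q + 1) < ‖π‖ :=
    pow_succ_lt_of_lt_rpow (by positivity) hπ0.le (max_lt hu hu')
  have hcontract := norm_sub_le_of_ghphi_cross_eq hπ0 hπ1.le hq2 hr
    (le_max_left _ _) (le_max_right _ _) heq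
  by_contra hne
  exact hcontract.not_gt
    (mul_lt_of_lt_one_left (norm_pos_iff.2 (sub_ne_zero.2 hne)) ((div_lt_one hπ0).2 hr))

theorem gross_hopkins_injective_small_disk {p : ℕ} [Fact p.Prime] {C : Type*} [NormedField C] [IsUltrametricDist C]
    [CompleteSpace C] [IsAlgClosed C] [Algebra ℚ_[p] C]
    (hiso : ∀ x : ℚ_[p], ‖algebraMap ℚ_[p] C x‖ = ‖x‖)
    (K : IntermediateField ℚ_[p] C) (hKfin : FiniteDimensional ℚ_[p] K)
    (q : ℕ) (hq : ∃ r : ℕ, 0 < r ∧ q = p ^ r)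
    (π : C) (hπK : π ∈ K) (hπ0 : 0 < ‖π‖) (hπ1 : ‖π‖ < 1)
    (hπunif : ∀ x ∈ K, ‖x‖ < 1 → ‖x‖ ≤ ‖π‖)
    (hres : ∃ S : Finset C, S.card = q ∧ (∀ s ∈ S, s ∈ K ∧ ‖s‖ ≤ 1) ∧
      (∀ x ∈ K, ‖x‖ ≤ 1 → ∃ s ∈ S, ‖x - s‖ < 1) ∧
      (∀ s ∈ S, ∀ t ∈ S, s ≠ t → ‖s - t‖ = 1)) :
    ∀ u u' : C, ‖u‖ < ‖π‖ ^ ((1:ℝ)/(q+1)) → ‖u'‖ < ‖π‖ ^ ((1:ℝ)/(q+1)) →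
      ghphi0 π q u * ghphi1 π q u' = ghphi1 π q u * ghphi0 π q u' → u = u' :=
  gross_hopkins_injective_small_disk_general q hq π hπ0 hπ1
end

section
/- Every monomial X^a·Y^b occurring with nonzero coefficient in g(X,Y) = ∏_{i=1}^{q-1} F(X, ζ^i·Y) has both exponents divisible by q−1; that is, g(X,Y) belongs to R⟦X^{q-1}, Y^{q-1}⟧. -/
/-!
Substituting `(aX, bY)` into a series multiplies its coefficient of `X^i Y^j` by `a^i b^j`, so the
`i`-th factor of `g` is `F` rescaled by `(1, ζ^i)`. Hence `g` is fixed by two rescalings: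
`Y ↦ ζY` permutes the factors cyclically since `ζ^(q-1) = 1`, and `(X, Y) ↦ (ζX, ζY)` multiplies
each of the `q - 1` factors by `ζ`. In the domain `R`, a nonzero coefficient of `X^a Y^b` therefore
forces `ζ^b = 1` and `ζ^(a+b) = 1`, so the order `q - 1` of `ζ` divides `a` and `b`.
-/

open Filter


/-- Total degree of a multi-index. -/
def mdeg {sig : Type*} (d : sig →₀ ℕ) : ℕ := d.sum fun _ e => e

/-- Substitution of a multivariable power series `G` with vanishing constant
term into a one-variable power series `f`, i.e. `f(G)`.  (For `G` with zero
constant term only finitely many terms contribute to each coefficient, and the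
formula below computes the honest substitution.) -/
noncomputable def substPS {C : Type*} [CommRing C] {sig : Type*}
    (G : MvPowerSeries sig C) (f : PowerSeries C) : MvPowerSeries sig C :=
  fun d => ∑ n ∈ Finset.range (mdeg d + 1),
    PowerSeries.coeff n f * MvPowerSeries.coeff d (G ^ n)

/-- Substitution of a one-variable power series into a one-variable power
series: `f(G)`. -/
noncomputable def substPS1 {C : Type*} [CommRing C]
    (G f : PowerSeries C) : PowerSeries C :=
  substPS (G : MvPowerSeries Unit C) f

/-- Substitution of the pair `(a, b)` (each with vanishing constant term) into
a two-variable power series `F`, i.e. `F(a, b)`. -/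
noncomputable def subst2 {C : Type*} [CommRing C] {tau : Type*}
    (a b : MvPowerSeries tau C) (F : MvPowerSeries (Fin 2) C) : MvPowerSeries tau C :=
  fun e => ∑ ij ∈ Finset.range (mdeg e + 1) ×ˢ Finset.range (mdeg e + 1),
    MvPowerSeries.coeff (Finsupp.single 0 ij.1 + Finsupp.single 1 ij.2) F *
      MvPowerSeries.coeff e (a ^ ij.1 * b ^ ij.2)

open MvPowerSeries Finset

theorem Finsupp.eq_single_zero_add_single_one (e : Fin 2 →₀ ℕ) :
    e = Finsupp.single 0 (e 0) + Finsupp.single 1 (e 1) := by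
  ext s
  fin_cases s <;> simp

theorem Finsupp.prod_pow_fin_two {M : Type*} [CommMonoid M] (e : Fin 2 →₀ ℕ) (a b : M) :
    (e.prod fun s m => ![a, b] s ^ m) = a ^ e 0 * b ^ e 1 := by
  simp [Finsupp.prod_fintype, Fin.prod_univ_two]

theorem mdeg_fin_two (e : Fin 2 →₀ ℕ) : mdeg e = e 0 + e 1 := by
  conv_lhs => rw [e.eq_single_zero_add_single_one]
  simp [mdeg, Finsupp.sum_add_index]

theorem Function.Periodic.prod_Icc_one_add_one {M : Type*} [CommMonoid M] {h : ℕ → M} {n : ℕ}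
    (hh : Function.Periodic h n) :
    ∏ i ∈ Icc 1 n, h (i + 1) = ∏ i ∈ Icc 1 n, h i := by
  have hIcc (k : ℕ → M) : ∏ i ∈ Icc 1 n, k i = ∏ i ∈ range n, k (i + 1) := by
    rw [range_eq_Ico, prod_Ico_add', zero_add, Ico_add_one_right_eq_Icc]
  rw [hIcc, hIcc]
  cases n with
  | zero => rfl
  | succ m =>
    rw [prod_range_succ, prod_range_succ' (fun i => h (i + 1)), zero_add, ← hh 1, add_comm 1]

namespace MvPowerSeries

variable {σ R : Type*}

theorem rescale_C [CommSemiring R] (a : σ → R) (r : R) : rescale a (C r) = C r := by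
  classical
  ext n
  rw [coeff_rescale, coeff_C]
  split_ifs with hn
  · simp [hn]
  · rw [mul_zero]

theorem rescale_prod_rescale_pow [CommSemiring R] {u : σ → R} {n : ℕ} (hu : u ^ n = 1)
    (F : MvPowerSeries σ R) :
    rescale u (∏ i ∈ Icc 1 n, rescale (u ^ i) F) = ∏ i ∈ Icc 1 n, rescale (u ^ i) F := by
  rw [map_prod]
  simp_rw [rescale_rescale, ← pow_succ]
  exact Function.Periodic.prod_Icc_one_add_one (h := fun i => rescale (u ^ i) F)
    fun i => by dsimp only; rw [pow_add, hu, mul_one]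

theorem rescale_prod_rescale_of_rescale_eq_C_mul [CommSemiring R] {ι : Type*} {b : σ → R}
    {c : R} {F : MvPowerSeries σ R} (hF : rescale b F = C c * F) (s : Finset ι)
    (hc : c ^ s.card = 1) (v : ι → σ → R) :
    rescale b (∏ i ∈ s, rescale (v i) F) = ∏ i ∈ s, rescale (v i) F := by
  have hcomm (i : ι) : rescale b (rescale (v i) F) = C c * rescale (v i) F := by
    rw [rescale_rescale, mul_comm, ← rescale_rescale, hF, map_mul, rescale_C]
  rw [map_prod, prod_congr rfl fun i _ => hcomm i, prod_mul_distrib, prod_const, ← map_pow, hc,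
    map_one, one_mul]

theorem prod_pow_eq_one_of_rescale_eq_self [CommSemiring R] [IsRightCancelMulZero R]
    {a : σ → R} {f : MvPowerSeries σ R} (hf : rescale a f = f) {d : σ →₀ ℕ}
    (hd : coeff d f ≠ 0) : (d.prod fun s m => a s ^ m) = 1 :=
  (mul_eq_right₀ hd).mp (by rw [← coeff_rescale, hf])

theorem subst2_C_mul_X_C_mul_X [CommRing R] (a b : R) (F : MvPowerSeries (Fin 2) R) :
    subst2 (C a * X 0) (C b * X 1) F = rescale ![a, b] F := by
  have hpow (i j : ℕ) : (C a * X 0 : MvPowerSeries (Fin 2) R) ^ i * (C b * X 1) ^ j =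
      monomial (Finsupp.single 0 i + Finsupp.single 1 j) (a ^ i * b ^ j) := by
    rw [mul_pow, mul_pow, ← map_pow, ← map_pow, X_pow_eq, X_pow_eq, mul_mul_mul_comm,
      monomial_mul_monomial, ← map_mul, mul_one, ← monomial_zero_eq_C_apply, monomial_mul_monomial,
      zero_add, mul_one]
  ext e
  rw [coeff_apply, subst2, sum_eq_single (e 0, e 1)]
  · rw [hpow, coeff_monomial, if_pos e.eq_single_zero_add_single_one,
      ← e.eq_single_zero_add_single_one, coeff_rescale, Finsupp.prod_pow_fin_two, mul_comm]
  · rintro ⟨i, j⟩ _ hne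
    rw [hpow, coeff_monomial, if_neg, mul_zero]
    rintro rfl
    simp at hne
  · simp [mdeg_fin_two]

end MvPowerSeries

theorem lubin_product_exponents_general (q : ℕ)
    (R : Type*) [CommRing R] [IsDomain R]
    (ζ : R) (hζ : orderOf ζ = q - 1)
    (F : MvPowerSeries (Fin 2) R)
    (hζend : subst2 (MvPowerSeries.C (σ := Fin 2) (R := R) ζ * MvPowerSeries.X 0)
        (MvPowerSeries.C (σ := Fin 2) (R := R) ζ * MvPowerSeries.X 1) F = MvPowerSeries.C (σ := Fin 2) (R := R) ζ * F) :
    ∀ d : Fin 2 →₀ ℕ,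
      MvPowerSeries.coeff (R := R) d
        (∏ i ∈ Finset.Icc 1 (q-1),
          subst2 (MvPowerSeries.X 0 : MvPowerSeries (Fin 2) R)
            (MvPowerSeries.C (σ := Fin 2) (R := R) (ζ^i) * MvPowerSeries.X 1) F) ≠ 0 →
      (q-1) ∣ d 0 ∧ (q-1) ∣ d 1 := by
  intro d hd
  have hζq : ζ ^ (q - 1) = 1 := hζ ▸ pow_orderOf_eq_one ζ
  have hfactor (i : ℕ) : subst2 (X 0) (C (ζ ^ i) * X 1) F = rescale (![1, ζ] ^ i) F := by
    rw [← one_mul (X 0), ← map_one C, subst2_C_mul_X_C_mul_X]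
    congr
    ext j
    fin_cases j <;> simp
  simp only [hfactor] at hd
  rw [subst2_C_mul_X_C_mul_X] at hζend
  have hd₁ : ζ ^ d 1 = 1 := by
    simpa only [Finsupp.prod_pow_fin_two, one_pow, one_mul] using
      prod_pow_eq_one_of_rescale_eq_self
        (rescale_prod_rescale_pow (u := ![1, ζ]) (by ext j; fin_cases j <;> simp [hζq]) F) hd
  have hd₀ : ζ ^ d 0 = 1 := by
    simpa only [Finsupp.prod_pow_fin_two, hd₁, mul_one] using
      prod_pow_eq_one_of_rescale_eq_self
        (rescale_prod_rescale_of_rescale_eq_C_mul hζend _ (by simpa using hζq) _) hd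
  exact ⟨hζ ▸ orderOf_dvd_of_pow_eq_one hd₀, hζ ▸ orderOf_dvd_of_pow_eq_one hd₁⟩

theorem lubin_product_exponents (p q : ℕ) (hp : p.Prime) (hq : ∃ r : ℕ, 0 < r ∧ q = p ^ r)
    (R : Type*) [CommRing R] [IsDomain R]
    (ζ : R) (hζ : orderOf ζ = q - 1)
    (F : MvPowerSeries (Fin 2) R)
    (hX : subst2 (MvPowerSeries.X 0 : MvPowerSeries (Fin 2) R) 0 F = MvPowerSeries.X 0)
    (hY : subst2 (0 : MvPowerSeries (Fin 2) R) (MvPowerSeries.X 1) F = MvPowerSeries.X 1)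
    (hcomm : subst2 (MvPowerSeries.X 1 : MvPowerSeries (Fin 2) R) (MvPowerSeries.X 0) F = F)
    (hassoc :
      subst2 (subst2 (MvPowerSeries.X 0 : MvPowerSeries (Fin 3) R) (MvPowerSeries.X 1) F)
          (MvPowerSeries.X 2) F =
        subst2 (MvPowerSeries.X 0 : MvPowerSeries (Fin 3) R)
          (subst2 (MvPowerSeries.X 1 : MvPowerSeries (Fin 3) R) (MvPowerSeries.X 2) F) F)
    (hζend : subst2 (MvPowerSeries.C (σ := Fin 2) (R := R) ζ * MvPowerSeries.X 0)
        (MvPowerSeries.C (σ := Fin 2) (R := R) ζ * MvPowerSeries.X 1) F = MvPowerSeries.C (σ := Fin 2) (R := R) ζ * F) :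
    ∀ d : Fin 2 →₀ ℕ,
      MvPowerSeries.coeff (R := R) d
        (∏ i ∈ Finset.Icc 1 (q-1),
          subst2 (MvPowerSeries.X 0 : MvPowerSeries (Fin 2) R)
            (MvPowerSeries.C (σ := Fin 2) (R := R) (ζ^i) * MvPowerSeries.X 1) F) ≠ 0 →
      (q-1) ∣ d 0 ∧ (q-1) ∣ d 1 :=
  lubin_product_exponents_general q R ζ hζ F hζend
end

section
/- Set g(X,Y) = ∏_{i=1}^{q-1} F(X, ζ^i·Y). Then g(X,0) = X^{q-1}, and if in addition q is odd, then g(Y,X) = −g(X,Y). -/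
open Filter


/-!
Putting `Y = 0` turns every factor `F(X, ζⁱY)` into `F(X, 0) = X`. For the symmetry, commutativity
and `ζⁱ`-linearity of `F` give `F(Y, ζⁱX) = F(ζⁱX, Y) = ζⁱ F(X, ζ^(q-1-i) Y)`, so swapping `X` and
`Y` permutes the factors and multiplies the product by `∏ ζⁱ = ζ^(q(q-1)/2)`. For odd `q` this is
`(ζ^((q-1)/2))^q = -1`, since `ζ^((q-1)/2)` is a primitive square root of unity in the domain `R`.

For substituends without constant term `subst2` agrees with Mathlib's `MvPowerSeries.subst`,
whose functoriality (`subst_comp_subst_apply`) does all the bookkeeping.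
-/

open MvPowerSeries Finset

theorem mdeg_eq_degree {σ : Type*} (d : σ →₀ ℕ) : mdeg d = d.degree := rfl

section Subst

variable {R : Type*} [CommRing R] {τ : Type*}

theorem MvPowerSeries.coeff_pow_mul_pow_eq_zero {a b : MvPowerSeries τ R}
    (ha : a.constantCoeff = 0) (hb : b.constantCoeff = 0) {i j : ℕ} {e : τ →₀ ℕ}
    (h : e.degree < i + j) : coeff e (a ^ i * b ^ j) = 0 := by
  apply coeff_of_lt_order
  calc (e.degree : ℕ∞) < i + j := by exact_mod_cast h
    _ ≤ (a ^ i).order + (b ^ j).order :=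
      add_le_add (le_order_pow_of_constantCoeff_eq_zero i ha)
        (le_order_pow_of_constantCoeff_eq_zero j hb)
    _ ≤ _ := le_order_mul

theorem MvPowerSeries.HasSubst.pair {a b : MvPowerSeries τ R} (ha : a.constantCoeff = 0)
    (hb : b.constantCoeff = 0) : HasSubst ![a, b] :=
  hasSubst_of_constantCoeff_zero (Fin.forall_fin_two.2 ⟨ha, hb⟩)

theorem subst2_eq_subst {a b : MvPowerSeries τ R} (ha : a.constantCoeff = 0)
    (hb : b.constantCoeff = 0) (F : MvPowerSeries (Fin 2) R) :
    subst2 a b F = subst ![a, b] F := by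
  ext e
  let pair : ℕ × ℕ → Fin 2 →₀ ℕ := fun ij => Finsupp.single 0 ij.1 + Finsupp.single 1 ij.2
  have hpair : ∀ d, pair (d 0, d 1) = d := fun d => by
    ext i; fin_cases i <;> simp [pair]
  have hinj : Function.Injective pair := fun x y h => by
    have h0 := congrArg (· 0) h
    have h1 := congrArg (· 1) h
    simp [pair] at h0 h1
    exact Prod.ext h0 h1
  have hprod : ∀ d : Fin 2 →₀ ℕ, (d.prod fun s k => ![a, b] s ^ k) = a ^ d 0 * b ^ d 1 :=
    fun d => by simp [Finsupp.prod_fintype, Fin.prod_univ_two]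
  -- the terms of Mathlib's finsum vanish outside the box summed over in `subst2`
  rw [coeff_subst (.pair ha hb), finsum_eq_sum_of_support_subset _
    (s := (range (mdeg e + 1) ×ˢ range (mdeg e + 1)).image pair) ?_, sum_image hinj.injOn]
  · refine sum_congr rfl fun ij _ => ?_
    simp [hprod, pair, smul_eq_mul]
  · intro d hd
    rw [Function.mem_support, hprod] at hd
    rw [coe_image]
    refine ⟨(d 0, d 1), ?_, hpair d⟩
    by_contra hbig
    simp only [coe_product, coe_range, Set.mem_prod, Set.mem_Iio, not_and_or, not_lt] at hbig
    rw [coeff_pow_mul_pow_eq_zero ha hb (by rw [← mdeg_eq_degree]; omega), smul_zero] at hd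
    exact hd rfl

end Subst

namespace MvPowerSeries

theorem subst_prod {R : Type*} [CommRing R] {σ τ : Type*}
    {a : σ → MvPowerSeries τ R} (ha : HasSubst a) {ι : Type*} (s : Finset ι)
    (f : ι → MvPowerSeries σ R) : subst a (∏ i ∈ s, f i) = ∏ i ∈ s, subst a (f i) := by
  simpa only [coe_substAlgHom] using map_prod (substAlgHom ha) f s

variable {R : Type*} [CommRing R] {τ : Type*} {F : MvPowerSeries (Fin 2) R}

local notation "X₀" => X (0 : Fin 2)
local notation "X₁" => X (1 : Fin 2)

theorem subst_pair_subst_pair {a b : MvPowerSeries τ R} (hab : HasSubst ![a, b])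
    {u v : MvPowerSeries (Fin 2) R} (huv : HasSubst ![u, v]) :
    subst ![a, b] (subst ![u, v] F) = subst ![subst ![a, b] u, subst ![a, b] v] F := by
  rw [subst_comp_subst_apply huv hab]
  congr 1
  ext1 i
  fin_cases i <;> rfl

theorem subst_C_mul_X {a b : MvPowerSeries τ R} (hab : HasSubst ![a, b]) (c : R) (i : Fin 2) :
    subst ![a, b] (C c * X i) = C c * ![a, b] i := by
  rw [subst_mul hab, subst_C, subst_X hab]

theorem HasSubst.C_mul_pair {a b : MvPowerSeries τ R} (ha : a.constantCoeff = 0)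
    (hb : b.constantCoeff = 0) (c : R) : HasSubst ![C c * a, C c * b] :=
  .pair (by simp [ha]) (by simp [hb])

def IsScalarEndo (F : MvPowerSeries (Fin 2) R) (c : R) : Prop :=
  subst ![C c * X₀, C c * X₁] F = C c * F

theorem IsScalarEndo.subst_pair {c : R} (hc : IsScalarEndo F c) {a b : MvPowerSeries τ R}
    (ha : a.constantCoeff = 0) (hb : b.constantCoeff = 0) :
    subst ![C c * a, C c * b] F = C c * subst ![a, b] F := by
  have hab : HasSubst ![a, b] := .pair ha hb
  have h := congrArg (subst ![a, b]) hc
  rwa [subst_pair_subst_pair hab (.C_mul_pair (constantCoeff_X 0) (constantCoeff_X 1) c),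
    subst_C_mul_X hab, subst_C_mul_X hab, subst_mul hab, subst_C] at h

theorem isScalarEndo_one : IsScalarEndo F 1 := by
  have hX : ![X₀, X₁] = (X : Fin 2 → MvPowerSeries (Fin 2) R) := by
    ext1 i; fin_cases i <;> rfl
  simp [IsScalarEndo, hX, subst_self]

theorem IsScalarEndo.mul {c d : R} (hc : IsScalarEndo F c) (hd : IsScalarEndo F d) :
    IsScalarEndo F (c * d) := by
  have h := hc.subst_pair (by simp : (C d * X₀ : MvPowerSeries (Fin 2) R).constantCoeff = 0)
    (by simp : (C d * X₁ : MvPowerSeries (Fin 2) R).constantCoeff = 0)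
  rwa [hd, ← mul_assoc, ← mul_assoc, ← map_mul, ← mul_assoc, ← map_mul] at h

theorem IsScalarEndo.pow {c : R} (hc : IsScalarEndo F c) (k : ℕ) : IsScalarEndo F (c ^ k) := by
  induction k with
  | zero => simpa using isScalarEndo_one
  | succ k ih => simpa [pow_succ] using ih.mul hc

theorem subst_pair_swap (hcomm : subst ![X₁, X₀] F = F) {a b : MvPowerSeries τ R}
    (ha : a.constantCoeff = 0) (hb : b.constantCoeff = 0) :
    subst ![b, a] F = subst ![a, b] F := by
  have hab : HasSubst ![a, b] := .pair ha hb
  simpa [subst_pair_subst_pair hab HasSubst.X_X, subst_X hab] using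
    congrArg (subst ![a, b]) hcomm

theorem subst_X_zero_subst_X_C_mul_X (hX : subst ![X₀, (0 : MvPowerSeries (Fin 2) R)] F = X₀)
    (c : R) : subst ![X₀, (0 : MvPowerSeries (Fin 2) R)] (subst ![X₀, C c * X₁] F) = X₀ := by
  have h0 : HasSubst ![X₀, (0 : MvPowerSeries (Fin 2) R)] := HasSubst.X_zero
  rw [subst_pair_subst_pair h0 (.pair (constantCoeff_X 0) (by simp)), subst_X h0,
    subst_C_mul_X h0]
  simpa using hX

theorem subst_X_one_X_zero_subst_X_C_mul_X (hcomm : subst ![X₁, X₀] F = F) {c d : R}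
    (hc : IsScalarEndo F c) (hcd : c * d = 1) :
    subst ![X₁, X₀] (subst ![X₀, C c * X₁] F) = C c * subst ![X₀, C d * X₁] F := by
  have h10 : HasSubst ![X₁, (X₀ : MvPowerSeries (Fin 2) R)] := HasSubst.X_X
  have hcX : HasSubst ![X₀, C c * (X₁ : MvPowerSeries (Fin 2) R)] :=
    .pair (constantCoeff_X 0) (by simp)
  calc subst ![X₁, X₀] (subst ![X₀, C c * X₁] F)
      = subst ![X₁, C c * X₀] F := by
        rw [subst_pair_subst_pair h10 hcX, subst_X h10, subst_C_mul_X h10]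
        rfl
    _ = subst ![C c * X₀, C c * (C d * X₁)] F := by
        rw [subst_pair_swap hcomm (by simp) (constantCoeff_X 1), ← mul_assoc, ← map_mul, hcd,
          map_one, one_mul]
    _ = C c * subst ![X₀, C d * X₁] F := hc.subst_pair (constantCoeff_X 0) (by simp)

end MvPowerSeries

theorem Finset.prod_Icc_one_reflect {M : Type*} [CommMonoid M] (f : ℕ → M) {n : ℕ}
    (h : f 0 = f n) : ∏ i ∈ Icc 1 n, f (n - i) = ∏ i ∈ Icc 1 n, f i := by
  rcases Nat.eq_zero_or_pos n with rfl | hn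
  · rfl
  rw [← Ico_add_one_right_eq_Icc, prod_Ico_reflect f 1 le_rfl, Nat.add_sub_cancel, Nat.sub_self,
    prod_eq_prod_Ico_succ_bot hn, prod_Ico_succ_top hn, h, mul_comm]

theorem Finset.sum_Icc_id_mul_two (n : ℕ) : (∑ i ∈ Icc 1 n, i) * 2 = n * (n + 1) := by
  induction n with
  | zero => rfl
  | succ n ih => rw [sum_Icc_succ_top (by omega), add_mul, ih]; ring

theorem IsPrimitiveRoot.pow_sum_Icc_eq_neg_one {R : Type*} [CommRing R] [IsDomain R] {ζ : R}
    {n : ℕ} (hζ : IsPrimitiveRoot ζ n) (hn : Even n) (hn0 : n ≠ 0) :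
    ζ ^ (∑ i ∈ Icc 1 n, i) = -1 := by
  obtain ⟨m, rfl⟩ := hn
  have hm : m ≠ 0 := by omega
  have hsum : ∑ i ∈ Icc 1 (m + m), i = m * (2 * m + 1) := by
    have := sum_Icc_id_mul_two (m + m)
    nlinarith
  have hζm : ζ ^ m = -1 := by
    refine IsPrimitiveRoot.eq_neg_one_of_two_right ?_
    simpa [← two_mul, hm] using hζ.pow_of_dvd hm (Dvd.intro_left 2 (two_mul m))
  rw [hsum, pow_mul, hζm, Odd.neg_one_pow (odd_two_mul_add_one m)]

open MvPowerSeries in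
theorem lubin_product_symmetry_general (p q : ℕ) (hp : p.Prime) (hq : ∃ r : ℕ, 0 < r ∧ q = p ^ r)
    (R : Type*) [CommRing R] [IsDomain R]
    (ζ : R) (hζ : orderOf ζ = q - 1)
    (F : MvPowerSeries (Fin 2) R)
    (hX : subst2 (MvPowerSeries.X 0 : MvPowerSeries (Fin 2) R) 0 F = MvPowerSeries.X 0)
    (hcomm : subst2 (MvPowerSeries.X 1 : MvPowerSeries (Fin 2) R) (MvPowerSeries.X 0) F = F)
    (hζend : subst2 (MvPowerSeries.C (σ := Fin 2) (R := R) ζ * MvPowerSeries.X 0)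
        (MvPowerSeries.C (σ := Fin 2) (R := R) ζ * MvPowerSeries.X 1) F = MvPowerSeries.C (σ := Fin 2) (R := R) ζ * F) :
    subst2 (MvPowerSeries.X 0 : MvPowerSeries (Fin 2) R) 0
      (∏ i ∈ Finset.Icc 1 (q-1),
        subst2 (MvPowerSeries.X 0 : MvPowerSeries (Fin 2) R)
          (MvPowerSeries.C (σ := Fin 2) (R := R) (ζ^i) * MvPowerSeries.X 1) F)
      = (MvPowerSeries.X 0) ^ (q-1) ∧
    (Odd q →
      subst2 (MvPowerSeries.X 1 : MvPowerSeries (Fin 2) R) (MvPowerSeries.X 0)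
        (∏ i ∈ Finset.Icc 1 (q-1),
          subst2 (MvPowerSeries.X 0 : MvPowerSeries (Fin 2) R)
            (MvPowerSeries.C (σ := Fin 2) (R := R) (ζ^i) * MvPowerSeries.X 1) F)
        = -(∏ i ∈ Finset.Icc 1 (q-1),
            subst2 (MvPowerSeries.X 0 : MvPowerSeries (Fin 2) R)
              (MvPowerSeries.C (σ := Fin 2) (R := R) (ζ^i) * MvPowerSeries.X 1) F)) := by
  simp only [subst2_eq_subst, constantCoeff_X, map_zero, map_mul, mul_zero] at hX hcomm hζend ⊢
  have hζn : ζ ^ (q - 1) = 1 := hζ ▸ pow_orderOf_eq_one ζ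
  refine ⟨?_, fun hodd => ?_⟩
  · rw [subst_prod HasSubst.X_zero, prod_congr rfl fun i _ => subst_X_zero_subst_X_C_mul_X hX _,
      prod_const, Nat.card_Icc, Nat.add_sub_cancel]
  have hswap (i : ℕ) (hi : i ∈ Icc 1 (q - 1)) :=
    subst_X_one_X_zero_subst_X_C_mul_X (d := ζ ^ (q - 1 - i)) hcomm (IsScalarEndo.pow hζend i)
      (by rw [← pow_add, Nat.add_sub_cancel' (mem_Icc.1 hi).2, hζn])
  have hq1 : q ≠ 1 := by
    obtain ⟨r, hr, rfl⟩ := hq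
    exact (Nat.one_lt_pow hr.ne' hp.one_lt).ne'
  have hsign : ζ ^ (∑ i ∈ Icc 1 (q - 1), i) = -1 :=
    (hζ ▸ IsPrimitiveRoot.orderOf ζ).pow_sum_Icc_eq_neg_one (Nat.Odd.sub_odd hodd odd_one)
      (by have := hodd.pos; omega)
  rw [subst_prod HasSubst.X_X, prod_congr rfl hswap, prod_mul_distrib, ← map_prod,
    prod_pow_eq_pow_sum, hsign, map_neg, map_one, neg_one_mul,
    prod_Icc_one_reflect (fun i => subst ![X 0, C (ζ ^ i) * X 1] F) (by simp [hζn])]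

theorem lubin_product_symmetry (p q : ℕ) (hp : p.Prime) (hq : ∃ r : ℕ, 0 < r ∧ q = p ^ r)
    (R : Type*) [CommRing R] [IsDomain R]
    (ζ : R) (hζ : orderOf ζ = q - 1)
    (F : MvPowerSeries (Fin 2) R)
    (hX : subst2 (MvPowerSeries.X 0 : MvPowerSeries (Fin 2) R) 0 F = MvPowerSeries.X 0)
    (hY : subst2 (0 : MvPowerSeries (Fin 2) R) (MvPowerSeries.X 1) F = MvPowerSeries.X 1)
    (hcomm : subst2 (MvPowerSeries.X 1 : MvPowerSeries (Fin 2) R) (MvPowerSeries.X 0) F = F)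
    (hassoc :
      subst2 (subst2 (MvPowerSeries.X 0 : MvPowerSeries (Fin 3) R) (MvPowerSeries.X 1) F)
          (MvPowerSeries.X 2) F =
        subst2 (MvPowerSeries.X 0 : MvPowerSeries (Fin 3) R)
          (subst2 (MvPowerSeries.X 1 : MvPowerSeries (Fin 3) R) (MvPowerSeries.X 2) F) F)
    (hζend : subst2 (MvPowerSeries.C (σ := Fin 2) (R := R) ζ * MvPowerSeries.X 0)
        (MvPowerSeries.C (σ := Fin 2) (R := R) ζ * MvPowerSeries.X 1) F = MvPowerSeries.C (σ := Fin 2) (R := R) ζ * F) :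
    subst2 (MvPowerSeries.X 0 : MvPowerSeries (Fin 2) R) 0
      (∏ i ∈ Finset.Icc 1 (q-1),
        subst2 (MvPowerSeries.X 0 : MvPowerSeries (Fin 2) R)
          (MvPowerSeries.C (σ := Fin 2) (R := R) (ζ^i) * MvPowerSeries.X 1) F)
      = (MvPowerSeries.X 0) ^ (q-1) ∧
    (Odd q →
      subst2 (MvPowerSeries.X 1 : MvPowerSeries (Fin 2) R) (MvPowerSeries.X 0)
        (∏ i ∈ Finset.Icc 1 (q-1),
          subst2 (MvPowerSeries.X 0 : MvPowerSeries (Fin 2) R)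
            (MvPowerSeries.C (σ := Fin 2) (R := R) (ζ^i) * MvPowerSeries.X 1) F)
        = -(∏ i ∈ Finset.Icc 1 (q-1),
            subst2 (MvPowerSeries.X 0 : MvPowerSeries (Fin 2) R)
              (MvPowerSeries.C (σ := Fin 2) (R := R) (ζ^i) * MvPowerSeries.X 1) F)) :=
  lubin_product_symmetry_general p q hp hq R ζ hζ F hX hcomm hζend
end

section
/- Let n ≥ 1 be an integer, let ξ ∈ k, and set E = q^n + 2q^{n-1} + 2q^{n-2} + ⋯ + 2q + 1. Suppose a_0, a_1, …, a_{n-1}, s ∈ k⟦u⟧ satisfy the following congruences modulo u^{E+2}: a_{n-1} ≡ (ξ^{q^{n+1}} − ξ^{q^n})·u^{1+q+⋯+q^n}; a_m ≡ −u^{q^{m+1}}·a_{m+1} for all 0 ≤ m ≤ n−2; and u ≡ s·(1 + a_0). Then, modulo u^{E+2}, a_0 ≡ (−1)^{n-1}·(ξ^{q^{n+1}} − ξ^{q^n})·u^{E} and s ≡ u + (−1)^{n}·(ξ^{q^{n+1}} − ξ^{q^n})·u^{E+1}. -/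
/-!
Unwinding the recursion `a_m ≡ -u^{q^{m+1}} a_{m+1}` from `m = n - 1` down to `m = 0` multiplies the
leading term of `a_{n-1}` by `(-1)^{n-1} u^{q + ⋯ + q^{n-1}}`, which gives `a_0`. Since `u^E ∣ a_0`
with `E ≥ 1`, the relation `u ≡ s (1 + a_0)` first forces `u ∣ s`, then `u^{E+1} ∣ s - u`, so that
`(s - u) a_0` vanishes modulo `u^{E+2}` and `s ≡ u - u a_0`.
-/

open Finset

theorem dvd_sub_of_dvd_sub_neg_pow_mul {R : Type*} [CommRing R] {x c : R} {N D : ℕ} (l : ℕ)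
    {a : ℕ → R} {w : ℕ → ℕ} (hl : x ^ N ∣ a l - c * x ^ D)
    (hrec : ∀ m < l, x ^ N ∣ a m - -(x ^ w m * a (m + 1))) :
    x ^ N ∣ a 0 - (-1) ^ l * c * x ^ (D + ∑ i ∈ range l, w i) := by
  induction l generalizing a w with
  | zero => simpa using hl
  | succ l ih =>
    have h1 : x ^ N ∣ a 1 - (-1) ^ l * c * x ^ (D + ∑ i ∈ range l, w (i + 1)) :=
      ih hl fun m hm => hrec (m + 1) (by omega)
    convert dvd_sub (hrec 0 l.succ_pos) (h1.mul_left (x ^ w 0)) using 1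
    rw [sum_range_succ']
    ring

theorem dvd_sub_of_dvd_sub_mul_one_add {R : Type*} [CommRing R] {x s a d : R} {E : ℕ}
    (hE : 1 ≤ E) (ha : x ^ (E + 2) ∣ a - d * x ^ E) (hs : x ^ (E + 2) ∣ x - s * (1 + a)) :
    x ^ (E + 2) ∣ s - (x - d * x ^ (E + 1)) := by
  have hxa : x ^ E ∣ a := by
    simpa using dvd_add ((pow_dvd_pow x (by omega)).trans ha) (dvd_mul_left (x ^ E) d)
  have hxs : x ∣ s := by
    have h₁ : x ∣ x - s * (1 + a) := (dvd_pow_self x (by omega)).trans hs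
    have h₂ : x ∣ s * a := ((dvd_pow_self x (by omega)).trans hxa).mul_left s
    convert dvd_sub (dvd_sub (dvd_refl x) h₁) h₂ using 1
    ring
  have hsx : x ^ (E + 1) ∣ s - x := by
    have h₁ : x ^ (E + 1) ∣ x - s * (1 + a) := (pow_dvd_pow x (by omega)).trans hs
    have h₂ : x ^ (E + 1) ∣ s * a := pow_succ' x E ▸ mul_dvd_mul hxs hxa
    convert dvd_neg.mpr (dvd_add h₁ h₂) using 1
    ring
  have hsxa : x ^ (E + 2) ∣ (s - x) * a :=
    (pow_dvd_pow x (by omega)).trans (pow_add x (E + 1) E ▸ mul_dvd_mul hsx hxa)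
  convert dvd_sub (dvd_sub (dvd_neg.mpr hs) hsxa) (ha.mul_left x) using 1
  ring

theorem sum_range_pow_add_sum_range_pow_succ (q l : ℕ) :
    ∑ i ∈ range (l + 2), q ^ i + ∑ i ∈ range l, q ^ (i + 1) =
      q ^ (l + 1) + 2 * ∑ i ∈ Ico 1 (l + 1), q ^ i + 1 := by
  rw [sum_Ico_eq_sum_range, sum_range_succ, sum_range_succ', Nat.add_sub_cancel]
  simp only [add_comm 1, pow_zero]
  ring

theorem chai_congruence_unit_part_general (q : ℕ)
    (k : Type*) [Field k]
    (n : ℕ) (hn : 1 ≤ n) (ξ : k)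
    (E : ℕ) (hE : E = q ^ n + 2 * (∑ i ∈ Finset.Ico 1 n, q ^ i) + 1)
    (a : ℕ → PowerSeries k) (s : PowerSeries k)
    (h1 : (PowerSeries.X : PowerSeries k) ^ (E + 2) ∣
      a (n - 1) - PowerSeries.C (R := k) (ξ ^ q ^ (n + 1) - ξ ^ q ^ n) *
        PowerSeries.X ^ (∑ i ∈ Finset.range (n + 1), q ^ i))
    (h2 : ∀ m : ℕ, m + 2 ≤ n → (PowerSeries.X : PowerSeries k) ^ (E + 2) ∣
      a m - (-(PowerSeries.X ^ (q ^ (m + 1)) * a (m + 1))))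
    (h3 : (PowerSeries.X : PowerSeries k) ^ (E + 2) ∣ PowerSeries.X - s * (1 + a 0)) :
    ((PowerSeries.X : PowerSeries k) ^ (E + 2) ∣
      a 0 - PowerSeries.C (R := k) ((-1 : k) ^ (n - 1) * (ξ ^ q ^ (n + 1) - ξ ^ q ^ n)) *
        PowerSeries.X ^ E) ∧
    ((PowerSeries.X : PowerSeries k) ^ (E + 2) ∣
      s - (PowerSeries.X + PowerSeries.C (R := k) ((-1 : k) ^ n * (ξ ^ q ^ (n + 1) - ξ ^ q ^ n)) *
        PowerSeries.X ^ (E + 1))) := by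
  obtain ⟨l, rfl⟩ : ∃ l, n = l + 1 := ⟨n - 1, by omega⟩
  rw [Nat.add_sub_cancel] at h1 ⊢
  have ha0 := dvd_sub_of_dvd_sub_neg_pow_mul l h1 fun m hm => h2 m (by omega)
  rw [sum_range_pow_add_sum_range_pow_succ, ← hE] at ha0
  simp only [map_mul, map_pow, map_neg, map_one] at ha0 ⊢
  refine ⟨ha0, ?_⟩
  convert dvd_sub_of_dvd_sub_mul_one_add (by omega) ha0 h3 using 2
  ring

theorem chai_congruence_unit_part (p q : ℕ) (hp : p.Prime)
    (hq : ∃ r : ℕ, 0 < r ∧ q = p ^ r)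
    (k : Type*) [Field k] [Fintype k] (hcard : Fintype.card k = q ^ 2)
    (n : ℕ) (hn : 1 ≤ n) (ξ : k)
    (E : ℕ) (hE : E = q ^ n + 2 * (∑ i ∈ Finset.Ico 1 n, q ^ i) + 1)
    (a : ℕ → PowerSeries k) (s : PowerSeries k)
    (h1 : (PowerSeries.X : PowerSeries k) ^ (E + 2) ∣
      a (n - 1) - PowerSeries.C (R := k) (ξ ^ q ^ (n + 1) - ξ ^ q ^ n) *
        PowerSeries.X ^ (∑ i ∈ Finset.range (n + 1), q ^ i))
    (h2 : ∀ m : ℕ, m + 2 ≤ n → (PowerSeries.X : PowerSeries k) ^ (E + 2) ∣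
      a m - (-(PowerSeries.X ^ (q ^ (m + 1)) * a (m + 1))))
    (h3 : (PowerSeries.X : PowerSeries k) ^ (E + 2) ∣ PowerSeries.X - s * (1 + a 0)) :
    ((PowerSeries.X : PowerSeries k) ^ (E + 2) ∣
      a 0 - PowerSeries.C (R := k) ((-1 : k) ^ (n - 1) * (ξ ^ q ^ (n + 1) - ξ ^ q ^ n)) *
        PowerSeries.X ^ E) ∧
    ((PowerSeries.X : PowerSeries k) ^ (E + 2) ∣
      s - (PowerSeries.X + PowerSeries.C (R := k) ((-1 : k) ^ n * (ξ ^ q ^ (n + 1) - ξ ^ q ^ n)) *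
        PowerSeries.X ^ (E + 1))) :=
  chai_congruence_unit_part_general q k n hn ξ E hE a s h1 h2 h3
end

section
/- For every u ∈ ℂ_p with |u| < 1, the sequence (π^k·m_{2k}(u))_{k≥0} and the sequence (π^k·m_{2k-1}(u))_{k≥1} both converge in ℂ_p (so that the coordinates φ_0(u) = lim_{k→∞} π^k·m_{2k}(u) and φ_1(u) = lim_{k→∞} π^k·m_{2k-1}(u) of the Gross–Hopkins period map are defined on the whole open unit disk). -/
open Filter


open Topology

/-! The defect `D_k(u) = π·m_{k+2}(u) - m_k(u)` satisfies
`π·D_{k+2}(u) = u·D_{k+1}(u^q) + D_k(u^{q²})`, so by induction `|π|^{k+1}·|D_k(u)| ≤ |u|^{2^k}`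
whenever `|u| ≤ 1` and `q ≥ 2`. For `|u| < 1` this doubly exponential decay beats the growth of
`|π|^{-k}`, hence `D_k(u) → 0`. The consecutive differences of `π^{n+j}·m_{2n+j}(u)` are
`π^{n+j}·D_{2n+j}(u)`, and in a complete ultrametric field a sequence whose consecutive
differences tend to zero converges. -/

lemma mul_le_two_pow_of_two_mul_le {N k : ℕ} (hk : 2 * N ≤ k) : N * k ≤ 2 ^ k := by
  induction k, hk using Nat.le_induction with
  | base => nlinarith [Nat.two_mul_sq_add_one_le_two_pow_two_mul N]
  | succ k hk ih =>
    have hN : N ≤ 2 ^ k := Nat.lt_two_pow_self.le.trans (Nat.pow_le_pow_right two_pos (by omega))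
    rw [pow_succ]
    nlinarith

lemma tendsto_pow_two_pow_div_pow_atTop_nhds_zero {a b : ℝ} (ha₀ : 0 ≤ a) (ha₁ : a < 1)
    (hb : 0 < b) : Tendsto (fun k => a ^ 2 ^ k / b ^ k) atTop (𝓝 0) := by
  obtain ⟨N, hN⟩ := exists_pow_lt_of_lt_one hb ha₁
  have hgeom : Tendsto (fun k => (a ^ N / b) ^ k) atTop (𝓝 0) :=
    tendsto_pow_atTop_nhds_zero_of_lt_one (by positivity) ((div_lt_one hb).2 hN)
  refine squeeze_zero' (Eventually.of_forall fun k => by positivity) ?_ hgeom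
  filter_upwards [eventually_ge_atTop (2 * N)] with k hk
  rw [div_pow, ← pow_mul]
  exact div_le_div_of_nonneg_right
    (pow_le_pow_of_le_one ha₀ ha₁.le (mul_le_two_pow_of_two_mul_le hk)) (by positivity)

section GrossHopkins

variable {C : Type*}

section Field

variable [Field C] {π : C} (q : ℕ)

lemma mul_ghm_add_two (hπ : π ≠ 0) (k : ℕ) (u : C) :
    π * ghm π q (k + 2) u = u * ghm π q (k + 1) (u ^ q) + ghm π q k (u ^ q ^ 2) := by
  rw [ghm]
  field_simp

lemma mul_ghm_two_sub_ghm_zero (hπ : π ≠ 0) (u : C) :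
    π * (π * ghm π q 2 u - ghm π q 0 u) = u ^ (q + 1) := by
  simp only [ghm]
  field_simp
  ring

lemma sq_mul_ghm_three_sub_ghm_one (hπ : π ≠ 0) (u : C) :
    π ^ 2 * (π * ghm π q 3 u - ghm π q 1 u) = u ^ (q ^ 2 + q + 1) + π * u ^ q ^ 2 := by
  simp only [ghm]
  field_simp
  ring

lemma mul_ghm_add_four_sub_ghm_add_two (hπ : π ≠ 0) (k : ℕ) (u : C) :
    π * (π * ghm π q (k + 4) u - ghm π q (k + 2) u) =
      u * (π * ghm π q (k + 3) (u ^ q) - ghm π q (k + 1) (u ^ q)) +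
        (π * ghm π q (k + 2) (u ^ q ^ 2) - ghm π q k (u ^ q ^ 2)) := by
  linear_combination π * mul_ghm_add_two q hπ (k + 2) u - mul_ghm_add_two q hπ k u

end Field

variable [NormedField C] [IsUltrametricDist C] {π : C} {q : ℕ}

lemma norm_pow_mul_norm_ghm_sub_le (hq : 2 ≤ q) (hπ₀ : π ≠ 0) (hπ₁ : ‖π‖ ≤ 1) (k : ℕ) {u : C}
    (hu : ‖u‖ ≤ 1) :
    ‖π‖ ^ (k + 1) * ‖π * ghm π q (k + 2) u - ghm π q k u‖ ≤ ‖u‖ ^ 2 ^ k := by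
  induction k using Nat.twoStepInduction generalizing u with
  | zero =>
    rw [zero_add, zero_add, pow_one, ← norm_mul, mul_ghm_two_sub_ghm_zero q hπ₀, norm_pow]
    exact pow_le_pow_of_le_one (norm_nonneg u) hu (by omega)
  | one =>
    rw [← norm_pow, ← norm_mul, sq_mul_ghm_three_sub_ghm_one q hπ₀]
    refine (IsUltrametricDist.norm_add_le_max _ _).trans (max_le ?_ ?_)
    · rw [norm_pow]
      exact pow_le_pow_of_le_one (norm_nonneg u) hu (by nlinarith)
    · rw [norm_mul, norm_pow]
      exact (mul_le_of_le_one_left (by positivity) hπ₁).trans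
        (pow_le_pow_of_le_one (norm_nonneg u) hu (by nlinarith))
  | more k ih₀ ih₁ =>
    set D₁ := π * ghm π q (k + 3) (u ^ q) - ghm π q (k + 1) (u ^ q)
    set D₀ := π * ghm π q (k + 2) (u ^ q ^ 2) - ghm π q k (u ^ q ^ 2)
    have h₁ : ‖π‖ ^ (k + 2) * ‖D₁‖ ≤ ‖u‖ ^ (q * 2 ^ (k + 1)) := by
      rw [pow_mul, ← norm_pow u q]
      exact ih₁ (u := u ^ q) (by rw [norm_pow]; exact pow_le_one₀ (norm_nonneg u) hu)
    have h₀ : ‖π‖ ^ (k + 1) * ‖D₀‖ ≤ ‖u‖ ^ (q ^ 2 * 2 ^ k) := by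
      rw [pow_mul, ← norm_pow u (q ^ 2)]
      exact ih₀ (u := u ^ q ^ 2) (by rw [norm_pow]; exact pow_le_one₀ (norm_nonneg u) hu)
    show ‖π‖ ^ (k + 3) * ‖π * ghm π q (k + 4) u - ghm π q (k + 2) u‖ ≤ ‖u‖ ^ 2 ^ (k + 2)
    calc ‖π‖ ^ (k + 3) * ‖π * ghm π q (k + 4) u - ghm π q (k + 2) u‖
        = ‖π‖ ^ (k + 2) * ‖u * D₁ + D₀‖ := by
          rw [← mul_ghm_add_four_sub_ghm_add_two q hπ₀, norm_mul]
          ring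
      _ ≤ ‖π‖ ^ (k + 2) * max ‖u * D₁‖ ‖D₀‖ := by
          gcongr
          exact IsUltrametricDist.norm_add_le_max _ _
      _ = max (‖u‖ * (‖π‖ ^ (k + 2) * ‖D₁‖)) (‖π‖ * (‖π‖ ^ (k + 1) * ‖D₀‖)) := by
          rw [mul_max_of_nonneg _ _ (by positivity), norm_mul]
          ring_nf
      _ ≤ max (‖u‖ * ‖u‖ ^ (q * 2 ^ (k + 1))) (1 * ‖u‖ ^ (q ^ 2 * 2 ^ k)) := by gcongr
      _ ≤ ‖u‖ ^ 2 ^ (k + 2) := by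
          have h₂ : 2 ^ (k + 2) ≤ q * 2 ^ (k + 1) := by
            rw [pow_succ' 2 (k + 1)]
            exact Nat.mul_le_mul_right _ hq
          have h₃ : q * 2 ^ (k + 1) ≤ q ^ 2 * 2 ^ k := by
            rw [sq, mul_assoc, pow_succ']
            exact Nat.mul_le_mul_left _ (Nat.mul_le_mul_right _ hq)
          rw [← pow_succ', one_mul]
          exact max_le (pow_le_pow_of_le_one (norm_nonneg u) hu (by omega))
            (pow_le_pow_of_le_one (norm_nonneg u) hu (by omega))

lemma tendsto_mul_ghm_add_two_sub_ghm (hq : 2 ≤ q) (hπ₀ : π ≠ 0) (hπ₁ : ‖π‖ ≤ 1) {u : C}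
    (hu : ‖u‖ < 1) :
    Tendsto (fun k => π * ghm π q (k + 2) u - ghm π q k u) atTop (𝓝 0) := by
  have hπ : 0 < ‖π‖ := norm_pos_iff.2 hπ₀
  refine squeeze_zero_norm (fun k => ?_)
    (by simpa using (tendsto_pow_two_pow_div_pow_atTop_nhds_zero (norm_nonneg u) hu hπ).div_const ‖π‖)
  rw [div_div, ← pow_succ, le_div_iff₀ (by positivity), mul_comm]
  exact norm_pow_mul_norm_ghm_sub_le hq hπ₀ hπ₁ k hu.le

end GrossHopkins

lemma exists_tendsto_pow_mul_of_tendsto_mul_sub {C : Type*} [NormedField C] [IsUltrametricDist C]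
    [CompleteSpace C] {π : C} (hπ : ‖π‖ ≤ 1) {s : ℕ → C}
    (hs : Tendsto (fun k => π * s (k + 2) - s k) atTop (𝓝 0)) (j : ℕ) :
    ∃ L, Tendsto (fun n => π ^ (n + j) * s (2 * n + j)) atTop (𝓝 L) := by
  refine cauchySeq_tendsto_of_complete (NonarchimedeanAddGroup.cauchySeq_of_tendsto_sub_nhds_zero ?_)
  have hdiff : ∀ n, π ^ (n + 1 + j) * s (2 * (n + 1) + j) - π ^ (n + j) * s (2 * n + j) =
      π ^ (n + j) * (π * s (2 * n + j + 2) - s (2 * n + j)) := fun n => by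
    rw [show 2 * (n + 1) + j = 2 * n + j + 2 by ring]
    ring
  have hsub : Tendsto (fun n => π * s (2 * n + j + 2) - s (2 * n + j)) atTop (𝓝 0) :=
    hs.comp (tendsto_atTop_mono (fun n => (by omega : n ≤ 2 * n + j)) tendsto_id)
  refine squeeze_zero_norm (fun n => ?_) (by simpa using hsub.norm)
  rw [hdiff, norm_mul, norm_pow]
  exact mul_le_of_le_one_left (norm_nonneg _) (pow_le_one₀ (norm_nonneg _) hπ)

theorem period_map_coordinates_converge_general {p : ℕ} [Fact p.Prime] {C : Type*} [NormedField C] [IsUltrametricDist C]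
    [CompleteSpace C]
    (q : ℕ) (hq : ∃ r : ℕ, 0 < r ∧ q = p ^ r)
    (π : C) (hπ0 : 0 < ‖π‖) (hπ1 : ‖π‖ < 1) :
    ∀ u : C, ‖u‖ < 1 →
      (∃ L : C, Tendsto (fun k => π ^ k * ghm π q (2*k) u) atTop (nhds L)) ∧
      (∃ L : C, Tendsto (fun k => π ^ (k+1) * ghm π q (2*k+1) u) atTop (nhds L)) := by
  intro u hu
  have hq₂ : 2 ≤ q := by
    obtain ⟨r, hr, rfl⟩ := hq
    exact (Fact.out : p.Prime).two_le.trans (le_self_pow (Fact.out : p.Prime).one_lt.le hr.ne')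
  have hconv := exists_tendsto_pow_mul_of_tendsto_mul_sub (s := fun k => ghm π q k u) hπ1.le
    (tendsto_mul_ghm_add_two_sub_ghm hq₂ (norm_pos_iff.1 hπ0) hπ1.le hu)
  exact ⟨by simpa using hconv 0, hconv 1⟩

theorem period_map_coordinates_converge {p : ℕ} [Fact p.Prime] {C : Type*} [NormedField C] [IsUltrametricDist C]
    [CompleteSpace C] [IsAlgClosed C] [Algebra ℚ_[p] C]
    (hiso : ∀ x : ℚ_[p], ‖algebraMap ℚ_[p] C x‖ = ‖x‖)
    (K : IntermediateField ℚ_[p] C) (hKfin : FiniteDimensional ℚ_[p] K)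
    (q : ℕ) (hq : ∃ r : ℕ, 0 < r ∧ q = p ^ r)
    (π : C) (hπK : π ∈ K) (hπ0 : 0 < ‖π‖) (hπ1 : ‖π‖ < 1)
    (hπunif : ∀ x ∈ K, ‖x‖ < 1 → ‖x‖ ≤ ‖π‖)
    (hres : ∃ S : Finset C, S.card = q ∧ (∀ s ∈ S, s ∈ K ∧ ‖s‖ ≤ 1) ∧
      (∀ x ∈ K, ‖x‖ ≤ 1 → ∃ s ∈ S, ‖x - s‖ < 1) ∧
      (∀ s ∈ S, ∀ t ∈ S, s ≠ t → ‖s - t‖ = 1)) :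
    ∀ u : C, ‖u‖ < 1 →
      (∃ L : C, Tendsto (fun k => π ^ k * ghm π q (2*k) u) atTop (nhds L)) ∧
      (∃ L : C, Tendsto (fun k => π ^ (k+1) * ghm π q (2*k+1) u) atTop (nhds L)) :=
  period_map_coordinates_converge_general q hq π hπ0 hπ1
end
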